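/- arXiv:math/0404138 — 6 statements merged into one kernel-verified Lean document; each statement's English description precedes it below -/
import Mathlib

section
/- Let m ≥ 0 and let (m_i)_{0≤i≤d-1} and (m'_i)_{0≤i≤d'-1} be two nondecreasing finite sequences of natural numbers. If for every integer l ≥ 0 one has Σ_{i=0}^{d-1} C(m+l-m_i, m) = Σ_{i=0}^{d'-1} C(m+l-m'_i, m) (where the binomial C(a,m) is taken to be 0 when a < m), then d = d' and m_i = m'_i for all 0 ≤ i ≤ d-1. -/
/-!
The summand `l ↦ C(m + l - v, m)` vanishes for `l < v` and equals `1` at `l = v`. Hence the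
smallest entry of a nondecreasing sequence is the least `l` at which the Hilbert function is
nonzero, so it is determined by the Hilbert function; subtracting its summand and inducting on
the length recovers the remaining entries.
-/

open Finset

def hilbertSummand (m v l : ℕ) : ℕ := if v ≤ m + l then Nat.choose (m + l - v) m else 0

def hilbertSum (m : ℕ) {d : ℕ} (ms : Fin d → ℕ) (l : ℕ) : ℕ := ∑ i, hilbertSummand m (ms i) l

lemma hilbertSummand_self (m v : ℕ) : hilbertSummand m v v = 1 := by
  simp [hilbertSummand]

lemma hilbertSummand_eq_zero_of_lt {m v l : ℕ} (h : l < v) : hilbertSummand m v l = 0 := by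
  unfold hilbertSummand
  split_ifs
  · exact Nat.choose_eq_zero_of_lt (by omega)
  · rfl

lemma hilbertSum_zero_length (m : ℕ) (ms : Fin 0 → ℕ) (l : ℕ) : hilbertSum m ms l = 0 := by
  simp [hilbertSum]

lemma hilbertSum_succ (m : ℕ) {d : ℕ} (ms : Fin (d + 1) → ℕ) (l : ℕ) :
    hilbertSum m ms l = hilbertSummand m (ms 0) l + hilbertSum m (Fin.tail ms) l :=
  Fin.sum_univ_succ _

lemma one_le_hilbertSum_apply {m d : ℕ} (ms : Fin d → ℕ) (i : Fin d) :
    1 ≤ hilbertSum m ms (ms i) :=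
  hilbertSummand_self m (ms i) ▸
    single_le_sum (f := fun j ↦ hilbertSummand m (ms j) (ms i)) (fun _ _ ↦ Nat.zero_le _)
      (mem_univ i)

lemma hilbertSum_eq_zero_of_lt {m d : ℕ} {ms : Fin (d + 1) → ℕ} (hms : Monotone ms) {l : ℕ}
    (hl : l < ms 0) : hilbertSum m ms l = 0 :=
  sum_eq_zero fun i _ ↦ hilbertSummand_eq_zero_of_lt (hl.trans_le (hms (Fin.zero_le i)))

lemma apply_zero_le_of_hilbertSum_eq {m d d' : ℕ} (ms : Fin (d + 1) → ℕ)
    {ms' : Fin (d' + 1) → ℕ} (hms' : Monotone ms') (h : hilbertSum m ms = hilbertSum m ms') :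
    ms' 0 ≤ ms 0 := by
  by_contra! hlt
  have := one_le_hilbertSum_apply (m := m) ms 0
  rw [congrFun h, hilbertSum_eq_zero_of_lt hms' hlt] at this
  omega

theorem eq_of_hilbertSum_eq (m : ℕ) {d d' : ℕ} {ms : Fin d → ℕ} {ms' : Fin d' → ℕ}
    (hms : Monotone ms) (hms' : Monotone ms') (h : hilbertSum m ms = hilbertSum m ms') :
    ∃ hd : d = d', ∀ i : Fin d, ms i = ms' (Fin.cast hd i) := by
  induction d generalizing d' with
  | zero =>
    cases d' with
    | zero => exact ⟨rfl, fun i ↦ i.elim0⟩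
    | succ d' =>
      have := one_le_hilbertSum_apply (m := m) ms' 0
      rw [← congrFun h, hilbertSum_zero_length] at this
      omega
  | succ d ih =>
    cases d' with
    | zero =>
      have := one_le_hilbertSum_apply (m := m) ms 0
      rw [congrFun h, hilbertSum_zero_length] at this
      omega
    | succ d' =>
      have head : ms 0 = ms' 0 :=
        le_antisymm (apply_zero_le_of_hilbertSum_eq ms' hms h.symm)
          (apply_zero_le_of_hilbertSum_eq ms hms' h)
      have tail : hilbertSum m (Fin.tail ms) = hilbertSum m (Fin.tail ms') := by
        funext l
        have := congrFun h l
        rw [hilbertSum_succ, hilbertSum_succ, head] at this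
        exact Nat.add_left_cancel this
      obtain ⟨rfl, htail⟩ := ih (hms.comp Fin.strictMono_succ.monotone)
        (hms'.comp Fin.strictMono_succ.monotone) tail
      exact ⟨rfl, Fin.cases head fun i ↦ htail i⟩

/-- Uniqueness of the characteristic sequence: if two nondecreasing sequences
give the same Hilbert function `l ↦ Σ_i C(m+l-m_i, m)` (binomial taken as `0`
when the top argument is negative), they coincide. -/
theorem stmt_0 (m d d' : ℕ) (ms : Fin d → ℕ) (ms' : Fin d' → ℕ)
    (hms : Monotone ms) (hms' : Monotone ms')
    (h : ∀ l : ℕ,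
      (∑ i : Fin d, if ms i ≤ m + l then Nat.choose (m + l - ms i) m else 0) =
      (∑ i : Fin d', if ms' i ≤ m + l then Nat.choose (m + l - ms' i) m else 0)) :
    ∃ hd : d = d', ∀ i : Fin d, ms i = ms' (Fin.cast hd i) :=
  eq_of_hilbertSum_eq m hms hms' (funext h)
end

section
/- Let d ≥ 1, r ≥ 1, and let (m_i)_{0≤i≤d-1} be a nondecreasing sequence of natural numbers with m_0 = 0, m_{i+1} ≤ m_i + 1 for all i, and m_{i+3} ≤ m_i + 2 for all i ≤ d − r (with i+3 ≤ d−1). Then m_{d-1} ≤ r + ⌊(2d−2r−1)/3⌋. -/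
/-! Along the multiples of `3` up to `3q`, with `q = ⌊(d - r)/3⌋`, the sequence grows by at most `2`
per block, so `m (3q) ≤ 2q`; from there to `d - 1` it grows by at most one per step. The resulting
bound `d - 1 - q` equals `r + ⌊(2d - 2r - 1)/3⌋` up to the rounding of `d - r` modulo `3`. -/

theorem le_add_mul_of_forall_step_le (m : ℕ → ℕ) (a p c k : ℕ)
    (h : ∀ j < k, m (a + p * (j + 1)) ≤ m (a + p * j) + c) :
    m (a + p * k) ≤ m a + c * k := by
  induction k with
  | zero => simp
  | succ k ih =>
    calc m (a + p * (k + 1)) ≤ m (a + p * k) + c := h k k.lt_succ_self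
      _ ≤ m a + c * k + c := Nat.add_le_add_right (ih fun j hj => h j (by omega)) c
      _ = m a + c * (k + 1) := by ring

theorem stmt_6_general (d r : ℕ) (hr : 1 ≤ r) (m : ℕ → ℕ)
    (hm0 : m 0 = 0)
    (hstep : ∀ i, i + 1 ≤ d - 1 → m (i + 1) ≤ m i + 1)
    (hstep3 : ∀ i, i ≤ d - r → i + 3 ≤ d - 1 → m (i + 3) ≤ m i + 2) :
    m (d - 1) ≤ r + (2 * d - 2 * r - 1) / 3 := by
  obtain ⟨q, hq⟩ : ∃ q, q = (d - r) / 3 := ⟨_, rfl⟩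
  have hfast : m (3 * q) ≤ 2 * q := by
    simpa [hm0] using le_add_mul_of_forall_step_le m 0 3 2 q fun j hj => by
      simpa [Nat.mul_succ] using hstep3 (3 * j) (by omega) (by omega)
  have hslow : m (3 * q + (d - 1 - 3 * q)) ≤ m (3 * q) + (d - 1 - 3 * q) := by
    simpa using le_add_mul_of_forall_step_le m (3 * q) 1 1 (d - 1 - 3 * q) fun j hj => by
      simpa [← add_assoc] using hstep (3 * q + j) (by omega)
  rw [show 3 * q + (d - 1 - 3 * q) = d - 1 by omega] at hslow
  omega

/-- If `(m_i)_{0 ≤ i ≤ d-1}` is nondecreasing with `m_0 = 0`,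
`m_{i+1} ≤ m_i + 1` for all `i`, and `m_{i+3} ≤ m_i + 2` for all `i ≤ d - r`,
then `m_{d-1} ≤ r + ⌊(2d-2r-1)/3⌋`. -/
theorem stmt_6 (d r : ℕ) (hd : 1 ≤ d) (hr : 1 ≤ r) (m : ℕ → ℕ)
    (hm0 : m 0 = 0)
    (hmono : ∀ i, i + 1 ≤ d - 1 → m i ≤ m (i + 1))
    (hstep : ∀ i, i + 1 ≤ d - 1 → m (i + 1) ≤ m i + 1)
    (hstep3 : ∀ i, i ≤ d - r → i + 3 ≤ d - 1 → m (i + 3) ≤ m i + 2) :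
    m (d - 1) ≤ r + (2 * d - 2 * r - 1) / 3 :=
  stmt_6_general d r hr m hm0 hstep hstep3
end

section
/- Let d ≥ 1, s ≥ 1, 0 ≤ r < d. Let (n'_i)_{0≤i≤d−1} be the nondecreasing sequence obtained from (s, s+1, ..., s+d−1) by subtracting 1 from the last r entries, i.e. n'_i = s+i for 0 ≤ i ≤ d−1−r and n'_i = s+i−1 for d−r ≤ i ≤ d−1. Let (n_i)_{0≤i≤d-1} be any nondecreasing sequence with n_0 ≥ s, n_{i+1} ≤ n_i + 1 for all i, and Σ_i n_i = Σ_i n'_i. Then for every integer l ≥ 0, Σ_{i=0}^{d-1} max(l+1−n_i, 0) ≤ Σ_{i=0}^{d-1} max(l+1−n'_i, 0). -/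
/-- Minimality of the Hilbert function of the residual of a `(1,r)` complete
intersection in an `(s,d)` complete intersection: the sequence `n'` given by
`n'_i = s+i` for `i < d-r` and `n'_i = s+i-1` for `i ≥ d-r` pointwise
maximizes `Σ_i (l+1-n_i)_+` among nondecreasing sequences `n` with `n_0 ≥ s`,
`n_{i+1} ≤ n_i + 1` and the same total sum. -/
theorem stmt_11 (d s r : ℕ) (hd : 1 ≤ d) (hs : 1 ≤ s) (hr : r < d)
    (n' : ℕ → ℕ) (hn' : ∀ i, n' i = if i < d - r then s + i else s + i - 1)
    (n : ℕ → ℕ)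
    (hmono : ∀ i, i + 1 < d → n i ≤ n (i + 1))
    (h0 : s ≤ n 0)
    (hstep : ∀ i, i + 1 < d → n (i + 1) ≤ n i + 1)
    (hsum : ∑ i ∈ Finset.range d, n i = ∑ i ∈ Finset.range d, n' i) :
    ∀ l : ℕ, (∑ i ∈ Finset.range d, (l + 1 - n i)) ≤
      ∑ i ∈ Finset.range d, (l + 1 - n' i) := by
  -- monotonicity over a range
  have mono : ∀ j, j < d → ∀ i, i ≤ j → n i ≤ n j := by
    intro j
    induction j with
    | zero =>
      intro _ i hi
      have hi0 : i = 0 := Nat.le_zero.mp hi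
      rw [hi0]
    | succ j ih =>
      intro hj i hi
      rcases Nat.lt_or_ge i (j + 1) with h | h
      · exact le_trans (ih (by omega) i (by omega)) (hmono j hj)
      · have hi' : i = j + 1 := by omega
        rw [hi']
  -- step bound: n j ≤ n i + (j - i)
  have stepb : ∀ j, j < d → ∀ i, i ≤ j → n j ≤ n i + (j - i) := by
    intro j
    induction j with
    | zero =>
      intro _ i hi
      have hi0 : i = 0 := Nat.le_zero.mp hi
      rw [hi0]
      omega
    | succ j ih =>
      intro hj i hi
      rcases Nat.lt_or_ge i (j + 1) with h | h
      · have h1 := ih (by omega) i (by omega)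
        have h2 := hstep j hj
        omega
      · have hi' : i = j + 1 := by omega
        rw [hi']
        omega
  -- head sums dominate
  have headA : ∀ j k, k + j = d →
      ∑ i ∈ Finset.range k, n' i ≤ ∑ i ∈ Finset.range k, n i := by
    intro j
    induction j with
    | zero =>
      intro k hk
      have : k = d := by omega
      subst this
      exact hsum.ge
    | succ j ih =>
      intro k hk
      have hkd : k < d := by omega
      by_cases hcase : s + k ≤ n k
      · refine Finset.sum_le_sum ?_
        intro i hi
        simp only [Finset.mem_range] at hi
        have h1 := stepb k hkd i (le_of_lt hi)
        have h2 := hn' i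
        split at h2 <;> omega
      · have ih' := ih (k + 1) (by omega)
        rw [Finset.sum_range_succ, Finset.sum_range_succ] at ih'
        have hnk : n k ≤ n' k := by
          have h2 := hn' k
          split at h2 <;> omega
        omega
  intro l
  set m := l + 1 with hm
  have hex : ∃ i, m ≤ n i ∨ d ≤ i := ⟨d, Or.inr le_rfl⟩
  set k := Nat.find hex with hkdef
  have hkspec := Nat.find_spec hex
  have hkd : k ≤ d := Nat.find_min' hex (Or.inr le_rfl)
  have hlt : ∀ i, i < k → n i < m ∧ i < d := by
    intro i hi
    have := Nat.find_min hex hi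
    push_neg at this
    omega
  have hge : ∀ i, k ≤ i → i < d → m ≤ n i := by
    intro i hki hid
    rcases hkspec with h | h
    · exact le_trans h (mono i hid k hki)
    · omega
  -- split LHS
  have hsplit : (∑ i ∈ Finset.range d, (m - n i)) =
      (∑ i ∈ Finset.range k, (m - n i)) + ∑ i ∈ Finset.Ico k d, (m - n i) :=
    (Finset.sum_range_add_sum_Ico _ hkd).symm
  have hzero : (∑ i ∈ Finset.Ico k d, (m - n i)) = 0 := by
    refine Finset.sum_eq_zero ?_
    intro i hi
    simp only [Finset.mem_Ico] at hi
    have := hge i hi.1 hi.2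
    omega
  have hkey : (∑ i ∈ Finset.range k, (m - n i)) + (∑ i ∈ Finset.range k, n i)
      = k * m := by
    rw [← Finset.sum_add_distrib]
    have : ∀ i ∈ Finset.range k, (m - n i) + n i = m := by
      intro i hi
      simp only [Finset.mem_range] at hi
      have := (hlt i hi).1
      omega
    rw [Finset.sum_congr rfl this, Finset.sum_const, smul_eq_mul, Finset.card_range]
  have hrhs1 : (∑ i ∈ Finset.range k, (m - n' i)) ≤
      ∑ i ∈ Finset.range d, (m - n' i) := by
    refine Finset.sum_le_sum_of_subset (Finset.range_subset_range.mpr hkd)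
  have hrhs2 : k * m ≤
      (∑ i ∈ Finset.range k, (m - n' i)) + (∑ i ∈ Finset.range k, n' i) := by
    rw [← Finset.sum_add_distrib]
    calc k * m = ∑ _i ∈ Finset.range k, m := by
          rw [Finset.sum_const, smul_eq_mul, Finset.card_range]
      _ ≤ _ := Finset.sum_le_sum (by intro i _; omega)
  have hA := headA (d - k) k (by omega)
  omega
end

section
/- Let d ≥ 1 and let (n_i)_{0≤i≤d-1} and (n'_i)_{0≤i≤d-1} be nondecreasing sequences of natural numbers such that for every integer l ≥ 0, Σ_{i=0}^{d-1} max(l+1−n_i,0) ≥ Σ_{i=0}^{d-1} max(l+1−n'_i,0), and such that Σ_i n_i = Σ_i n'_i. Suppose further that n_{i+1} ≤ n_i + 1 for all i, and that n' has exactly one index i_0 with n'_{i_0} = n'_{i_0+1} while n'_{i+1} = n'_i + 1 for all other i. If equality Σ_i max(l+1−n_i,0) = Σ_i max(l+1−n'_i,0) holds for all l, then n_i = n'_i for all i. -/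
/-!
Writing `l + 1 - a = #{m ≤ l | a ≤ m}` and exchanging sums, `Σ_i (l + 1 - n_i)` becomes the
partial sum up to `l` of the counting function `m ↦ #{i | n_i ≤ m}`. Equal partial sums for all
`l` force equal counting functions, and a nondecreasing sequence is recovered from its counting
function since `n_i ≤ l ↔ i < #{j | n_j ≤ l}`.
-/

open Finset

lemma card_filter_range_le (a N : ℕ) : #{m ∈ range N | a ≤ m} = N - a := by
  rw [range_eq_Ico, Ico_filter_le, Nat.card_Ico, Nat.zero_max]

lemma sum_tsub_eq_sum_card_filter_le {ι : Type*} (s : Finset ι) (f : ι → ℕ) (l : ℕ) :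
    ∑ i ∈ s, (l + 1 - f i) = ∑ m ∈ range (l + 1), #{i ∈ s | f i ≤ m} := by
  simp_rw [← card_filter_range_le, card_filter, sum_comm (s := s)]

lemma card_filter_le_eq_of_sum_tsub_eq {ι κ : Type*} {s : Finset ι} {t : Finset κ}
    {f : ι → ℕ} {g : κ → ℕ}
    (h : ∀ l, ∑ i ∈ s, (l + 1 - f i) = ∑ j ∈ t, (l + 1 - g j)) (m : ℕ) :
    #{i ∈ s | f i ≤ m} = #{j ∈ t | g j ≤ m} := by
  have hpartial : ∀ l, ∑ m ∈ range (l + 1), #{i ∈ s | f i ≤ m} =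
      ∑ m ∈ range (l + 1), #{j ∈ t | g j ≤ m} := fun l => by
    rw [← sum_tsub_eq_sum_card_filter_le, ← sum_tsub_eq_sum_card_filter_le, h]
  cases m with
  | zero => simpa using hpartial 0
  | succ k =>
    have hk := hpartial k
    have hk1 := hpartial (k + 1)
    rw [sum_range_succ, sum_range_succ (n := k + 1), hk] at hk1
    exact Nat.add_left_cancel hk1

lemma monotoneOn_Iio_of_le_succ {α : Type*} [Preorder α] {f : ℕ → α} {d : ℕ}
    (hf : ∀ i, i + 1 < d → f i ≤ f (i + 1)) : MonotoneOn f (Set.Iio d) := by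
  intro i _ j hj hij
  induction j, hij using Nat.le_induction with
  | base => rfl
  | succ k _ ih =>
    have hk : k + 1 < d := hj
    exact (ih (by simp only [Set.mem_Iio]; omega)).trans (hf k hk)

lemma MonotoneOn.le_iff_lt_card_filter_le {α : Type*} [LinearOrder α] {f : ℕ → α} {d i : ℕ}
    (hf : MonotoneOn f (Set.Iio d)) (hi : i < d) (l : α) :
    f i ≤ l ↔ i < #{j ∈ range d | f j ≤ l} := by
  constructor
  · intro hil
    have hsub : range (i + 1) ⊆ {j ∈ range d | f j ≤ l} := fun j hj => by
      simp only [mem_range] at hj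
      simp only [mem_filter, mem_range]
      exact ⟨by omega, (hf (by simp only [Set.mem_Iio]; omega) hi (by omega)).trans hil⟩
    simpa using card_le_card hsub
  · intro hcard
    by_contra! hli
    have hsub : {j ∈ range d | f j ≤ l} ⊆ range i := fun j hj => by
      simp only [mem_filter, mem_range] at hj ⊢
      by_contra! hij
      exact (hli.trans_le (hf hi hj.1 hij)).not_ge hj.2
    simpa using (card_le_card hsub).trans_lt' hcard

theorem stmt_13_general (d : ℕ) (n n' : ℕ → ℕ)
    (hmono : ∀ i, i + 1 < d → n i ≤ n (i + 1))
    (hmono' : ∀ i, i + 1 < d → n' i ≤ n' (i + 1))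
    (heq : ∀ l : ℕ, (∑ i ∈ Finset.range d, (l + 1 - n i)) =
      ∑ i ∈ Finset.range d, (l + 1 - n' i)) :
    ∀ i, i < d → n i = n' i := by
  intro i hi
  refine eq_of_forall_ge_iff fun l => ?_
  rw [(monotoneOn_Iio_of_le_succ hmono).le_iff_lt_card_filter_le hi,
    (monotoneOn_Iio_of_le_succ hmono').le_iff_lt_card_filter_le hi,
    card_filter_le_eq_of_sum_tsub_eq heq]

/-- Equality case of the minimality proposition: if `n` and `n'` are
nondecreasing, `Σ_i (l+1-n_i)_+ ≥ Σ_i (l+1-n'_i)_+` for all `l` with equal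
total sums `Σ n = Σ n'`, `n` has steps at most `1`, `n'` has exactly one
repetition and otherwise increases by exactly `1`, and equality
`Σ_i (l+1-n_i)_+ = Σ_i (l+1-n'_i)_+` holds for all `l`, then `n_i = n'_i`
for all `i < d`. -/
theorem stmt_13 (d : ℕ) (hd : 1 ≤ d) (n n' : ℕ → ℕ)
    (hmono : ∀ i, i + 1 < d → n i ≤ n (i + 1))
    (hmono' : ∀ i, i + 1 < d → n' i ≤ n' (i + 1))
    (hge : ∀ l : ℕ, (∑ i ∈ Finset.range d, (l + 1 - n' i)) ≤
      ∑ i ∈ Finset.range d, (l + 1 - n i))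
    (hsum : ∑ i ∈ Finset.range d, n i = ∑ i ∈ Finset.range d, n' i)
    (hstep : ∀ i, i + 1 < d → n (i + 1) ≤ n i + 1)
    (i₀ : ℕ) (hi₀ : i₀ + 1 < d) (hrep : n' i₀ = n' (i₀ + 1))
    (huniq : ∀ i, i + 1 < d → i ≠ i₀ → n' (i + 1) = n' i + 1)
    (heq : ∀ l : ℕ, (∑ i ∈ Finset.range d, (l + 1 - n i)) =
      ∑ i ∈ Finset.range d, (l + 1 - n' i)) :
    ∀ i, i < d → n i = n' i :=
  stmt_13_general d n n' hmono hmono' heq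
end

section
/- Let d ≥ 1, s ≥ 1, and 0 ≤ r < d, and set α := sd − r. Let G(α,d) := 1 + (sd/2)(s+d−4) − r(s+d−r/2−5/2), and let n'_i = s+i for 0 ≤ i ≤ d−1−r and n'_i = s+i−1 for d−r ≤ i ≤ d−1. Then Σ_{l=1}^{∞} ( α − Σ_{i=0}^{d-1} (max(l+1−i,0) − max(l+1−n'_i,0)) ) = G(α,d). -/
private lemma sumA (m : ℕ) : ∀ L : ℕ, m ≤ L + 1 →
    2 * ∑ l ∈ Finset.Icc 1 L, max ((l : ℤ) + 1 - m) 0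
      = ((L : ℤ) + 1 - m) * ((L : ℤ) + 2 - m) - (if m = 0 then 2 else 0) := by
  intro L
  induction L with
  | zero =>
    intro h
    interval_cases m <;> simp
  | succ L ih =>
    intro h
    rw [Finset.sum_Icc_succ_top (by omega : 1 ≤ L + 1)]
    by_cases hm : m ≤ L + 1
    · have ih' := ih hm
      have hmz : (m : ℤ) ≤ (L : ℤ) + 1 := by exact_mod_cast hm
      have hmax : max ((↑(L+1) : ℤ) + 1 - m) 0 = (L : ℤ) + 2 - m := by
        push_cast
        rw [max_eq_left (by linarith)]
        ring
      rw [hmax]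
      push_cast
      split_ifs at ih' ⊢ <;> linear_combination ih'
    · have hm2 : m = L + 2 := by omega
      subst hm2
      have h0 : ∑ l ∈ Finset.Icc 1 L, max ((l : ℤ) + 1 - (↑(L + 2) : ℤ)) 0 = 0 := by
        apply Finset.sum_eq_zero
        intro l hl
        simp only [Finset.mem_Icc] at hl
        have : (l : ℤ) ≤ (L : ℤ) := by exact_mod_cast hl.2
        rw [max_eq_right (by push_cast; linarith)]
      rw [h0]
      have hh : max ((↑(L+1) : ℤ) + 1 - (↑(L+2) : ℤ)) 0 = 0 := by
        rw [max_eq_right (by push_cast; linarith)]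
      rw [hh]
      have : L + 2 ≠ 0 := by omega
      simp only [this, if_false]
      push_cast; ring

private lemma sumI (n : ℕ) : 2 * ∑ i ∈ Finset.range n, (i : ℤ) = n * (n - 1) := by
  induction n with
  | zero => simp
  | succ n ih =>
    rw [Finset.sum_range_succ]
    push_cast
    linear_combination ih

/-- Halphen bound computation: with `α = sd - r`, `n'_i = s+i` for `i < d-r`
and `n'_i = s+i-1` for `i ≥ d-r`, and
`φ_Δ(l) = Σ_{i<d} ((l+1-i)_+ - (l+1-n'_i)_+)`, the eventually-zero series
`Σ_{l≥1} (α - φ_Δ(l))` equals `G(α,d) = 1 + (sd/2)(s+d-4) - r(s+d-r/2-5/2)`. -/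
theorem stmt_16 (d s r : ℕ) (hd : 1 ≤ d) (hs : 1 ≤ s) (hr : r < d)
    (α : ℤ) (hα : α = s * d - r)
    (n' : ℕ → ℕ) (hn' : ∀ i, n' i = if i < d - r then s + i else s + i - 1)
    (φ : ℕ → ℤ)
    (hφ : ∀ l : ℕ, φ l = ∑ i ∈ Finset.range d,
      (max ((l : ℤ) + 1 - i) 0 - max ((l : ℤ) + 1 - n' i) 0)) :
    ∀ L : ℕ, s + d ≤ L →
      (∑ l ∈ Finset.Icc 1 L, ((α : ℚ) - (φ l : ℚ))) =
        1 + (s * d : ℚ) / 2 * ((s : ℚ) + d - 4)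
          - (r : ℚ) * ((s : ℚ) + d - (r : ℚ) / 2 - 5 / 2) := by
  intro L hL
  set c := d - r with hc
  have hcd : c + r = d := by omega
  have hc1 : 1 ≤ c := by omega
  -- per-index identity for twice the inner sum over l
  have hsum : ∀ i ∈ Finset.range d,
      2 * ∑ l ∈ Finset.Icc 1 L, (max ((l : ℤ) + 1 - i) 0 - max ((l : ℤ) + 1 - n' i) 0)
      = ((if i < c then (s : ℤ) * (2 * (L : ℤ) + 3 - 2 * i - s)
          else (2 * (s : ℤ) - 2) * ((L : ℤ) + 1 - i) - ((s : ℤ) - 1) * ((s : ℤ) - 2))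
        - (if i = 0 then 2 else 0)) := by
    intro i hi
    rw [Finset.mem_range] at hi
    have hni_le : n' i ≤ L + 1 := by
      rw [hn' i]; split_ifs <;> omega
    have hni_pos : n' i ≠ 0 := by
      rw [hn' i]; split_ifs <;> omega
    rw [Finset.sum_sub_distrib, mul_sub, sumA i L (by omega), sumA (n' i) L hni_le]
    simp only [hni_pos, if_false, sub_zero]
    by_cases h : i < c
    · have : n' i = s + i := by rw [hn' i, if_pos (by omega)]
      rw [this]
      simp only [if_pos h]
      push_cast
      ring
    · have : n' i = s + i - 1 := by rw [hn' i, if_neg (by omega)]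
      have h2 : (↑(n' i) : ℤ) = (s : ℤ) + i - 1 := by
        rw [this]; push_cast [Nat.cast_sub (by omega : 1 ≤ s + i)]; ring
      rw [h2]
      simp only [if_neg h]
      ring
  -- twice the full sum, in ℤ
  have main : 2 * ∑ l ∈ Finset.Icc 1 L, (α - φ l)
      = 2 + (s : ℤ) * d * ((s : ℤ) + d - 4) - (r : ℤ) * (2 * s + 2 * d - r - 5) := by
    have h1 : ∑ l ∈ Finset.Icc 1 L, (α - φ l)
        = (L : ℤ) * α - ∑ l ∈ Finset.Icc 1 L, φ l := by
      rw [Finset.sum_sub_distrib, Finset.sum_const, Nat.card_Icc]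
      simp only [Nat.add_sub_cancel, nsmul_eq_mul]
    have h2 : ∑ l ∈ Finset.Icc 1 L, φ l
        = ∑ i ∈ Finset.range d, ∑ l ∈ Finset.Icc 1 L,
            (max ((l : ℤ) + 1 - i) 0 - max ((l : ℤ) + 1 - n' i) 0) := by
      simp only [hφ]
      exact Finset.sum_comm
    have h3 : 2 * ∑ l ∈ Finset.Icc 1 L, φ l
        = (∑ i ∈ Finset.range d,
            (if i < c then (s : ℤ) * (2 * (L : ℤ) + 3 - 2 * i - s)
             else (2 * (s : ℤ) - 2) * ((L : ℤ) + 1 - i) - ((s : ℤ) - 1) * ((s : ℤ) - 2)))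
          - (∑ i ∈ Finset.range d, (if i = 0 then (2 : ℤ) else 0)) := by
      rw [h2, Finset.mul_sum, ← Finset.sum_sub_distrib]
      exact Finset.sum_congr rfl hsum
    have h4 : ∑ i ∈ Finset.range d, (if i = 0 then (2 : ℤ) else 0) = 2 := by
      rw [Finset.sum_ite_eq' (Finset.range d) 0 (fun _ => (2 : ℤ))]
      simp [Finset.mem_range]; omega
    have h5 : ∑ i ∈ Finset.range d,
        (if i < c then (s : ℤ) * (2 * (L : ℤ) + 3 - 2 * i - s)
         else (2 * (s : ℤ) - 2) * ((L : ℤ) + 1 - i) - ((s : ℤ) - 1) * ((s : ℤ) - 2))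
        = (∑ i ∈ Finset.range c, (s : ℤ) * (2 * (L : ℤ) + 3 - 2 * i - s))
          + ∑ i ∈ Finset.Ico c d,
              ((2 * (s : ℤ) - 2) * ((L : ℤ) + 1 - i) - ((s : ℤ) - 1) * ((s : ℤ) - 2)) := by
      rw [Finset.range_eq_Ico, ← Finset.sum_Ico_consecutive _ (Nat.zero_le c) (by omega : c ≤ d),
        ← Finset.range_eq_Ico]
      congr 1
      · apply Finset.sum_congr rfl
        intro i hi
        rw [Finset.mem_range] at hi
        rw [if_pos hi]
      · apply Finset.sum_congr rfl
        intro i hi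
        rw [Finset.mem_Ico] at hi
        rw [if_neg (by omega)]
    have h6 : ∑ i ∈ Finset.Ico c d,
        ((2 * (s : ℤ) - 2) * ((L : ℤ) + 1 - i) - ((s : ℤ) - 1) * ((s : ℤ) - 2))
        = (∑ i ∈ Finset.range d, ((2 * (s : ℤ) - 2) * ((L : ℤ) + 1 - i) - ((s : ℤ) - 1) * ((s : ℤ) - 2)))
          - ∑ i ∈ Finset.range c, ((2 * (s : ℤ) - 2) * ((L : ℤ) + 1 - i) - ((s : ℤ) - 1) * ((s : ℤ) - 2)) := by
      rw [Finset.sum_Ico_eq_sub _ (by omega : c ≤ d)]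
    -- affine sums
    have aff : ∀ (a b : ℤ) (n : ℕ), ∑ i ∈ Finset.range n, (a + b * (i : ℤ))
        = n * a + b * ∑ i ∈ Finset.range n, (i : ℤ) := by
      intro a b n
      rw [Finset.sum_add_distrib, Finset.sum_const, ← Finset.mul_sum, nsmul_eq_mul,
        Finset.card_range]
    have hQc := sumI c
    have hQd := sumI d
    have e1 : ∑ i ∈ Finset.range c, (s : ℤ) * (2 * (L : ℤ) + 3 - 2 * i - s)
        = (c : ℤ) * ((s : ℤ) * (2 * (L : ℤ) + 3 - s)) + (-2 * s) * ∑ i ∈ Finset.range c, (i : ℤ) := by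
      rw [← aff]
      apply Finset.sum_congr rfl; intro i _; ring
    have e2 : ∀ n : ℕ, ∑ i ∈ Finset.range n, ((2 * (s : ℤ) - 2) * ((L : ℤ) + 1 - i) - ((s : ℤ) - 1) * ((s : ℤ) - 2))
        = (n : ℤ) * ((2 * (s : ℤ) - 2) * ((L : ℤ) + 1) - ((s : ℤ) - 1) * ((s : ℤ) - 2))
          + (-(2 * (s : ℤ) - 2)) * ∑ i ∈ Finset.range n, (i : ℤ) := by
      intro n
      rw [← aff]
      apply Finset.sum_congr rfl; intro i _; ring
    have hdc : (c : ℤ) = (d : ℤ) - (r : ℤ) := by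
      have : (c : ℤ) + r = d := by exact_mod_cast hcd
      linarith
    rw [h1] at *
    rw [mul_sub, h3, h4, h5, h6, e1, e2 d, e2 c, hα]
    rw [hdc] at hQc ⊢
    linear_combination hQc + ((s : ℤ) - 1) * hQd
  -- conclude in ℚ
  have mainq := congrArg (fun z : ℤ => (z : ℚ)) main
  push_cast at mainq
  linear_combination mainq / 2
end

section
/- Let d ≥ 1, s ≥ 1 with s ≤ d−2, and 0 ≤ r < d with α = sd − r. Define r(α) := s(s+3)/2 − r if r ≤ s+1, and r(α) := (s−1)(s+2)/2 if r ≥ s+1. Let (n'_i) be the sequence with n'_i = s+i for 0 ≤ i ≤ d−1−r and n'_i = s+i−1 for d−r ≤ i ≤ d−1, and define φ_Δ(l) := Σ_{i=0}^{d-1} (max(l+1−i,0) − max(l+1−n'_i,0)). Then α − φ_Δ(d−3) = r(α). -/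
/-!
Both sums in `φ_Δ(d-3)` are sums of truncated arithmetic progressions `Σ_{i<n} (a - i)_+`,
which equal `m(2a - m + 1)/2` with `m = min(n, a_+)` the number of nonzero terms.
The jumps of `n'` split the second sum into two such progressions; for `r ≤ s + 1` the
second one is empty, while for `r ≥ s + 2` the first one is untruncated.
-/

open Finset

lemma two_mul_sum_range_intCast (k : ℕ) : 2 * ∑ i ∈ range k, (i : ℤ) = k * (k - 1) := by
  have h := congrArg (Nat.cast : ℕ → ℤ) (sum_range_id_mul_two k)
  rcases k with _ | k
  · simp
  · push_cast at h
    simpa [mul_comm] using h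

lemma two_mul_sum_range_max_sub_zero (n : ℕ) (a : ℤ) :
    2 * ∑ i ∈ range n, max (a - i) 0 =
      min (n : ℤ) (max a 0) * (2 * a - min (n : ℤ) (max a 0) + 1) := by
  obtain ⟨k, hk⟩ : ∃ k : ℕ, min (n : ℤ) (max a 0) = k :=
    ⟨(min (n : ℤ) (max a 0)).toNat, by omega⟩
  have hkn : k ≤ n := by omega
  have htail : ∑ i ∈ Ico k n, max (a - i) 0 = 0 :=
    sum_eq_zero fun i hi => by have := mem_Ico.1 hi; omega
  have hhead : ∑ i ∈ range k, max (a - i) 0 = ∑ i ∈ range k, (a - i) :=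
    sum_congr rfl fun i hi => by have := mem_range.1 hi; omega
  rw [hk, ← sum_range_add_sum_Ico _ hkn, htail, hhead, add_zero, sum_sub_distrib, sum_const,
    card_range, nsmul_eq_mul]
  linear_combination -two_mul_sum_range_intCast k

lemma sum_range_max_sub_of_eq_ite (d r s : ℕ) (hr : r < d) (n' : ℕ → ℕ)
    (hn' : ∀ i, n' i = if i < d - r then s + i else s + i - 1) (c : ℤ) :
    ∑ i ∈ range d, max (c - n' i) 0 =
      ∑ i ∈ range (d - r), max (c - s - i) 0 +
        ∑ j ∈ range r, max (c - s - (d - r : ℕ) + 1 - j) 0 := by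
  conv_lhs => rw [show d = (d - r) + r by omega, sum_range_add]
  congr 1
  · refine sum_congr rfl fun i hi => ?_
    have := mem_range.1 hi
    rw [hn', if_pos this]
    push_cast
    ring_nf
  · refine sum_congr rfl fun j _ => ?_
    rw [hn', if_neg (by omega)]
    congr 1
    omega

theorem stmt_18_general (d s r : ℕ) (hs : 1 ≤ s) (hsd : s ≤ d - 2)
    (hr : r < d) (α : ℤ) (hα : α = s * d - r)
    (n' : ℕ → ℕ) (hn' : ∀ i, n' i = if i < d - r then s + i else s + i - 1)
    (φ : ℕ → ℤ)
    (hφ : ∀ l : ℕ, φ l = ∑ i ∈ Finset.range d,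
      (max ((l : ℤ) + 1 - i) 0 - max ((l : ℤ) + 1 - n' i) 0)) :
    ((α : ℚ) - (φ (d - 3) : ℚ)) =
      if r ≤ s + 1 then (s : ℚ) * ((s : ℚ) + 3) / 2 - r
      else ((s : ℚ) - 1) * ((s : ℚ) + 2) / 2 := by
  have hl : ((d - 3 : ℕ) : ℤ) + 1 = d - 2 := by omega
  have hc : (d : ℤ) - 2 - s - (d - r : ℕ) + 1 = r - 1 - s := by omega
  have hφ₀ : φ (d - 3) = ∑ i ∈ range d, max ((d : ℤ) - 2 - i) 0 -
      (∑ i ∈ range (d - r), max ((d : ℤ) - 2 - s - i) 0 +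
        ∑ j ∈ range r, max ((r : ℤ) - 1 - s - j) 0) := by
    rw [hφ, hl, sum_sub_distrib, sum_range_max_sub_of_eq_ite d r s hr n' hn', hc]
  have hA := two_mul_sum_range_max_sub_zero d ((d : ℤ) - 2)
  have hB := two_mul_sum_range_max_sub_zero (d - r) ((d : ℤ) - 2 - s)
  have hC := two_mul_sum_range_max_sub_zero r ((r : ℤ) - 1 - s)
  rw [show min (d : ℤ) (max (d - 2) 0) = d - 2 by omega] at hA
  suffices h : 2 * (α - φ (d - 3)) =
      if r ≤ s + 1 then (s : ℤ) * (s + 3) - 2 * r else ((s : ℤ) - 1) * (s + 2) by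
    have hQ : (2 : ℚ) * (α - φ (d - 3)) = if r ≤ s + 1 then (s : ℚ) * (s + 3) - 2 * r
        else ((s : ℚ) - 1) * (s + 2) := by
      split_ifs at h ⊢ <;> exact_mod_cast h
    split_ifs at hQ ⊢ <;> linear_combination hQ / 2
  rw [hφ₀, hα]
  split_ifs with hrs
  · rw [show min ((d - r : ℕ) : ℤ) (max (d - 2 - s) 0) = d - 2 - s by omega] at hB
    rw [show min (r : ℤ) (max (r - 1 - s) 0) = 0 by omega] at hC
    linear_combination -hA + hB + hC
  · rw [show min ((d - r : ℕ) : ℤ) (max (d - 2 - s) 0) = d - r by omega] at hB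
    rw [show min (r : ℤ) (max (r - 1 - s) 0) = r - 1 - s by omega] at hC
    linear_combination -hA + hB + hC

/-- Ciliberto's maximal dimension: with `α = sd - r`, `s ≤ d-2`, `n'` the
sequence `s+i` (for `i < d-r`) / `s+i-1` (for `i ≥ d-r`), and
`φ_Δ(l) = Σ_{i<d} ((l+1-i)_+ - (l+1-n'_i)_+)`, one has
`α - φ_Δ(d-3) = r(α)`, where `r(α) = s(s+3)/2 - r` if `r ≤ s+1` and
`r(α) = (s-1)(s+2)/2` if `r ≥ s+1`. -/
theorem stmt_18 (d s r : ℕ) (hd : 1 ≤ d) (hs : 1 ≤ s) (hsd : s ≤ d - 2)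
    (hr : r < d) (α : ℤ) (hα : α = s * d - r)
    (n' : ℕ → ℕ) (hn' : ∀ i, n' i = if i < d - r then s + i else s + i - 1)
    (φ : ℕ → ℤ)
    (hφ : ∀ l : ℕ, φ l = ∑ i ∈ Finset.range d,
      (max ((l : ℤ) + 1 - i) 0 - max ((l : ℤ) + 1 - n' i) 0)) :
    ((α : ℚ) - (φ (d - 3) : ℚ)) =
      if r ≤ s + 1 then (s : ℚ) * ((s : ℚ) + 3) / 2 - r
      else ((s : ℚ) - 1) * ((s : ℚ) + 2) / 2 :=
  stmt_18_general d s r hs hsd hr α hα n' hn' φ hφ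
end
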